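/- arXiv:2303.15943 — 2 statements merged into one kernel-verified Lean document; each statement's English description precedes it below -/
import Mathlib

section
/- Let X, Y be Hilbert spaces, A* : Y → X' a surjective linear isometry, Y^δ ⊆ Y a closed (e.g. finite-dimensional) subspace, and f ∈ Y'. Then the discrete normal equation — find w^δ ∈ Y^δ with (A*[w^δ], A*[v])_{X'} = f(v) for all v ∈ Y^δ — has a unique solution, and w^δ is the orthogonal projection of the continuous solution w onto Y^δ; consequently the reconstruction u^δ := R_X A*[w^δ] satisfies ‖u - u^δ‖_X = ‖w - w^δ‖_Y = min over v ∈ Y^δ of ‖w - v‖_Y, where u := R_X A*[w] is the exact solution. -/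
/-! Since `A*` and `R_X` are isometries, `y ↦ R_X A*[y]` is a linear isometry
`Y → X`, so it preserves inner products and the normal equations read `(w, v)_Y = f v`
and `(w^δ, v)_Y = f v`. Subtracting them, `w^δ` solves the discrete equation iff `w - w^δ ⊥ Y^δ`,
i.e. iff `w^δ` is the orthogonal projection of `w` onto the closed subspace `Y^δ`; the error
identity and the best-approximation property then follow from isometry and Pythagoras. -/

open scoped RealInnerProductSpace

section Galerkin

variable {𝕜 E : Type*} [RCLike 𝕜] [NormedAddCommGroup E] [InnerProductSpace 𝕜 E]

theorem Submodule.forall_inner_eq_iff_sub_mem_orthogonal (K : Submodule 𝕜 E) (w u : E) :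
    (∀ v ∈ K, inner 𝕜 u v = inner 𝕜 w v) ↔ w - u ∈ Kᗮ := by
  simp only [Submodule.mem_orthogonal', inner_sub_left, sub_eq_zero, eq_comm]

theorem Submodule.existsUnique_mem_and_sub_mem_orthogonal (K : Submodule 𝕜 E)
    [K.HasOrthogonalProjection] (w : E) : ∃! u, u ∈ K ∧ w - u ∈ Kᗮ :=
  ⟨K.starProjection w, ⟨K.starProjection_apply_mem w, K.sub_starProjection_mem_orthogonal w⟩,
    fun _ hu => (K.eq_starProjection_of_mem_orthogonal hu.1 hu.2).symm⟩

theorem Submodule.norm_sub_le_of_sub_mem_orthogonal {K : Submodule 𝕜 E} {w u v : E}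
    (hu : u ∈ K) (horth : w - u ∈ Kᗮ) (hv : v ∈ K) : ‖w - u‖ ≤ ‖w - v‖ := by
  have hpyth : ‖w - v‖ * ‖w - v‖ = ‖w - u‖ * ‖w - u‖ + ‖u - v‖ * ‖u - v‖ := by
    rw [← sub_add_sub_cancel w u v]
    exact norm_add_sq_eq_norm_sq_add_norm_sq_of_inner_eq_zero _ _
      ((K.mem_orthogonal' _).1 horth _ (K.sub_mem hu hv))
  exact (mul_self_le_mul_self_iff (norm_nonneg _) (norm_nonneg _)).2
    (hpyth ▸ le_add_of_nonneg_right (mul_self_nonneg _))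

end Galerkin

theorem stmt6_general
    {X : Type*} [NormedAddCommGroup X] [InnerProductSpace ℝ X] [CompleteSpace X]
    {Y : Type*} [NormedAddCommGroup Y] [InnerProductSpace ℝ Y] [CompleteSpace Y]
    (Astar : Y →L[ℝ] StrongDual ℝ X)
    (hiso : ∀ v : Y, ‖Astar v‖ = ‖v‖)
    (f : StrongDual ℝ Y)
    (R : StrongDual ℝ X → X) (hR : R = (InnerProductSpace.toDual ℝ X).symm)
    (Yδ : Submodule ℝ Y) (hYδ : IsClosed (Yδ : Set Y))
    (w : Y) (hw : ∀ v : Y, ⟪R (Astar w), R (Astar v)⟫ = f v) :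
    (∃! wδ : Y, wδ ∈ Yδ ∧ ∀ v ∈ Yδ, ⟪R (Astar wδ), R (Astar v)⟫ = f v) ∧
      ∀ wδ : Y, (wδ ∈ Yδ ∧ ∀ v ∈ Yδ, ⟪R (Astar wδ), R (Astar v)⟫ = f v) →
        (w - wδ ∈ Yδᗮ ∧
         ‖R (Astar w) - R (Astar wδ)‖ = ‖w - wδ‖ ∧
         ∀ v ∈ Yδ, ‖w - wδ‖ ≤ ‖w - v‖) := by
  let L : Y →ₗᵢ[ℝ] X := (InnerProductSpace.toDual ℝ X).symm.toLinearIsometry.comp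
    ⟨(Astar : Y →ₗ[ℝ] StrongDual ℝ X), hiso⟩
  have hL : ∀ y, R (Astar y) = L y := fun y => by subst hR; rfl
  simp only [hL, L.inner_map_map] at hw ⊢
  have : CompleteSpace Yδ := hYδ.completeSpace_coe
  have hsolves (u : Y) : (u ∈ Yδ ∧ ∀ v ∈ Yδ, ⟪u, v⟫ = f v) ↔ u ∈ Yδ ∧ w - u ∈ Yδᗮ := by
    simp only [← hw, Yδ.forall_inner_eq_iff_sub_mem_orthogonal]
  simp only [hsolves]
  refine ⟨Yδ.existsUnique_mem_and_sub_mem_orthogonal w, fun u ⟨hu, horth⟩ =>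
    ⟨horth, ?_, fun v hv => Yδ.norm_sub_le_of_sub_mem_orthogonal hu horth hv⟩⟩
  rw [← map_sub, L.norm_map]

/-- the discrete normal equation on a closed subspace `Y^δ ⊆ Y`
has a unique solution `w^δ`, which is the orthogonal projection of the
continuous solution `w` onto `Y^δ` (i.e. `w - w^δ ∈ (Y^δ)ᗮ`); the
reconstruction `u^δ := R_X A*[w^δ]` satisfies
`‖u - u^δ‖_X = ‖w - w^δ‖_Y = min_{v ∈ Y^δ} ‖w - v‖_Y`. -/
theorem stmt6
    {X : Type*} [NormedAddCommGroup X] [InnerProductSpace ℝ X] [CompleteSpace X]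
    {Y : Type*} [NormedAddCommGroup Y] [InnerProductSpace ℝ Y] [CompleteSpace Y]
    (Astar : Y →L[ℝ] StrongDual ℝ X)
    (hbij : Function.Bijective Astar) (hiso : ∀ v : Y, ‖Astar v‖ = ‖v‖)
    (f : StrongDual ℝ Y)
    (R : StrongDual ℝ X → X) (hR : R = (InnerProductSpace.toDual ℝ X).symm)
    (Yδ : Submodule ℝ Y) (hYδ : IsClosed (Yδ : Set Y))
    (w : Y) (hw : ∀ v : Y, ⟪R (Astar w), R (Astar v)⟫ = f v) :
    (∃! wδ : Y, wδ ∈ Yδ ∧ ∀ v ∈ Yδ, ⟪R (Astar wδ), R (Astar v)⟫ = f v) ∧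
      ∀ wδ : Y, (wδ ∈ Yδ ∧ ∀ v ∈ Yδ, ⟪R (Astar wδ), R (Astar v)⟫ = f v) →
        (w - wδ ∈ Yδᗮ ∧
         ‖R (Astar w) - R (Astar wδ)‖ = ‖w - wδ‖ ∧
         ∀ v ∈ Yδ, ‖w - wδ‖ ≤ ‖w - v‖) :=
  stmt6_general Astar hiso f R hR Yδ hYδ w hw
end

section
/- Let X, Y be Hilbert spaces, A* : Y → X' a surjective linear isometry, f ∈ Y', and Y^δ ⊆ Y a closed subspace. Denote by w the solution of the continuous normal equation and by w^δ the solution of the discrete normal equation on Y^δ. Then the discrete reconstruction u^δ := R_X A*[w^δ] is the X-orthogonal projection of the exact solution u := R_X A*[w] onto the subspace X^δ := R_X A*[Y^δ], i.e., u^δ is the best approximation of u in X^δ with respect to the X-norm. -/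
open scoped RealInnerProductSpace

theorem galerkin_orthogonality {X Y : Type*} [NormedAddCommGroup X] [InnerProductSpace ℝ X]
    {T : Y → X} {f : Y → ℝ} {S : Set Y} {u uδ : X}
    (hu : ∀ v, ⟪u, T v⟫ = f v) (huδ : ∀ v ∈ S, ⟪uδ, T v⟫ = f v) {v : Y} (hv : v ∈ S) :
    ⟪u - uδ, T v⟫ = 0 := by
  rw [inner_sub_left, hu v, huδ v hv, sub_self]

theorem norm_sub_le_norm_sub_of_inner_sub_eq_zero {E : Type*} [NormedAddCommGroup E]
    [InnerProductSpace ℝ E] {u p x : E} (hp : ⟪u - p, p⟫ = 0) (hx : ⟪u - p, x⟫ = 0) :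
    ‖u - p‖ ≤ ‖u - x‖ := by
  have hpx : ⟪u - p, p - x⟫ = 0 := by rw [inner_sub_right, hp, hx, sub_zero]
  have hpyth : ‖u - x‖ * ‖u - x‖ = ‖u - p‖ * ‖u - p‖ + ‖p - x‖ * ‖p - x‖ := by
    rw [← norm_add_sq_eq_norm_sq_add_norm_sq_real hpx, sub_add_sub_cancel]
  refine (mul_self_le_mul_self_iff (norm_nonneg _) (norm_nonneg _)).mpr ?_
  rw [hpyth]
  exact le_add_of_nonneg_right (mul_self_nonneg _)

theorem stmt11_general
    {X : Type*} [NormedAddCommGroup X] [InnerProductSpace ℝ X]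
    {Y : Type*} [NormedAddCommGroup Y] [InnerProductSpace ℝ Y]
    (Astar : Y →L[ℝ] StrongDual ℝ X)
    (f : StrongDual ℝ Y)
    (R : StrongDual ℝ X → X)
    (Yδ : Submodule ℝ Y)
    (w : Y) (hw : ∀ v : Y, ⟪R (Astar w), R (Astar v)⟫ = f v)
    (wδ : Y) (hwδmem : wδ ∈ Yδ)
    (hwδ : ∀ v ∈ Yδ, ⟪R (Astar wδ), R (Astar v)⟫ = f v) :
    (∃ y ∈ Yδ, R (Astar wδ) = R (Astar y)) ∧
    (∀ x : X, (∃ y ∈ Yδ, x = R (Astar y)) →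
      ⟪R (Astar w) - R (Astar wδ), x⟫ = 0) ∧
    (∀ x : X, (∃ y ∈ Yδ, x = R (Astar y)) →
      ‖R (Astar w) - R (Astar wδ)‖ ≤ ‖R (Astar w) - x‖) := by
  have horth : ∀ x : X, (∃ y ∈ Yδ, x = R (Astar y)) →
      ⟪R (Astar w) - R (Astar wδ), x⟫ = 0 := by
    rintro x ⟨y, hy, rfl⟩
    exact galerkin_orthogonality (T := fun v => R (Astar v)) hw hwδ hy
  have hmem : ∃ y ∈ Yδ, R (Astar wδ) = R (Astar y) := ⟨wδ, hwδmem, rfl⟩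
  exact ⟨hmem, horth, fun x hx =>
    norm_sub_le_norm_sub_of_inner_sub_eq_zero (horth _ hmem) (horth x hx)⟩

/-- the discrete reconstruction `u^δ := R_X A*[w^δ]` is the
`X`-orthogonal projection of the exact solution `u := R_X A*[w]` onto
`X^δ := R_X A*[Y^δ]`, i.e. the best approximation of `u` in `X^δ`. -/
theorem stmt11
    {X : Type*} [NormedAddCommGroup X] [InnerProductSpace ℝ X] [CompleteSpace X]
    {Y : Type*} [NormedAddCommGroup Y] [InnerProductSpace ℝ Y] [CompleteSpace Y]
    (Astar : Y →L[ℝ] StrongDual ℝ X)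
    (hbij : Function.Bijective Astar) (hiso : ∀ v : Y, ‖Astar v‖ = ‖v‖)
    (f : StrongDual ℝ Y)
    (R : StrongDual ℝ X → X) (hR : R = (InnerProductSpace.toDual ℝ X).symm)
    (Yδ : Submodule ℝ Y) (hYδ : IsClosed (Yδ : Set Y))
    (w : Y) (hw : ∀ v : Y, ⟪R (Astar w), R (Astar v)⟫ = f v)
    (wδ : Y) (hwδmem : wδ ∈ Yδ)
    (hwδ : ∀ v ∈ Yδ, ⟪R (Astar wδ), R (Astar v)⟫ = f v) :
    (∃ y ∈ Yδ, R (Astar wδ) = R (Astar y)) ∧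
    (∀ x : X, (∃ y ∈ Yδ, x = R (Astar y)) →
      ⟪R (Astar w) - R (Astar wδ), x⟫ = 0) ∧
    (∀ x : X, (∃ y ∈ Yδ, x = R (Astar y)) →
      ‖R (Astar w) - R (Astar wδ)‖ ≤ ‖R (Astar w) - x‖) :=
  stmt11_general Astar f R Yδ w hw wδ hwδmem hwδ
end
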